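/- arXiv:1903.06857 — 3 statements merged into one kernel-verified Lean document; each statement's English description precedes it below -/
import Mathlib

section
/- Let H₁ and H₂ be complex Hilbert spaces, Y : H₂ → H₁ and Z : H₁ → H₂ bounded linear operators, and let T be the off-diagonal operator matrix on H₁ ⊕ H₂ given by T(x₁, x₂) = (Y x₂, Z x₁). Then w(T) = sup over θ ∈ ℝ of (1/2)‖e^{iθ} Y + e^{-iθ} Z*‖, where Z* : H₂ → H₁ is the adjoint of Z and ‖·‖ is the operator norm. -/
/-
Rotating the quadratic form by a phase, `re (e^{-iθ} ⟪T x, x⟫) = re ⟪A_θ x₂, x₁⟫` with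
`A_θ = e^{iθ} Y + e^{-iθ} Z†`, and choosing `θ = arg ⟪T x, x⟫` turns the left side into
`‖⟪T x, x⟫‖`. On the other hand, for any operator `A` the supremum of `re ⟪A u, v⟫` over
`‖u‖² + ‖v‖² = 1` is `‖A‖ / 2`: AM-GM gives `≤`, and `v` parallel to `A u` with `‖v‖ = ‖u‖`
attains it.
-/

noncomputable def numRadius {H : Type*} [NormedAddCommGroup H] [InnerProductSpace ℂ H]
    (T : H →L[ℂ] H) : ℝ :=
  sSup {r : ℝ | ∃ x : H, ‖x‖ = 1 ∧ r = ‖(inner ℂ (T x) x : ℂ)‖}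

open Complex ContinuousLinearMap

section NumRadius

variable {H : Type*} [NormedAddCommGroup H] [InnerProductSpace ℂ H] (T : H →L[ℂ] H)

theorem numRadius_nonneg : 0 ≤ numRadius T :=
  Real.sSup_nonneg <| by rintro r ⟨x, -, rfl⟩; positivity

theorem norm_inner_apply_self_le_opNorm (x : H) : ‖inner ℂ (T x) x‖ ≤ ‖T‖ * ‖x‖ ^ 2 :=
  calc ‖inner ℂ (T x) x‖ ≤ ‖T x‖ * ‖x‖ := norm_inner_le_norm _ _
    _ ≤ ‖T‖ * ‖x‖ * ‖x‖ := by gcongr; exact T.le_opNorm x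
    _ = ‖T‖ * ‖x‖ ^ 2 := by ring

theorem norm_inner_apply_self_le_numRadius_mul_sq (x : H) :
    ‖inner ℂ (T x) x‖ ≤ numRadius T * ‖x‖ ^ 2 := by
  rcases eq_or_ne x 0 with rfl | hx
  · simp
  have hbdd : BddAbove {r : ℝ | ∃ x : H, ‖x‖ = 1 ∧ r = ‖inner ℂ (T x) x‖} :=
    ⟨‖T‖, by rintro r ⟨y, hy, rfl⟩; simpa [hy] using norm_inner_apply_self_le_opNorm T y⟩
  have hunit := le_csSup hbdd ⟨‖x‖⁻¹ • x, norm_smul_inv_norm hx, rfl⟩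
  simp only [map_smul_of_tower, RCLike.real_smul_eq_coe_smul (K := ℂ), inner_smul_left,
    inner_smul_right, norm_mul, Complex.norm_conj, norm_algebraMap', norm_inv, norm_norm] at hunit
  rw [numRadius]
  calc ‖inner ℂ (T x) x‖ = (‖x‖⁻¹ * (‖x‖⁻¹ * ‖inner ℂ (T x) x‖)) * ‖x‖ ^ 2 := by field_simp
    _ ≤ _ := by gcongr

theorem numRadius_le {c : ℝ} (hc : 0 ≤ c) (h : ∀ x, ‖inner ℂ (T x) x‖ ≤ c * ‖x‖ ^ 2) :
    numRadius T ≤ c :=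
  Real.sSup_le (by rintro r ⟨x, hx, rfl⟩; simpa [hx] using h x) hc

end NumRadius

section Bilinear

variable {𝕜 E F : Type*} [RCLike 𝕜] [NormedAddCommGroup E] [InnerProductSpace 𝕜 E]
  [NormedAddCommGroup F] [InnerProductSpace 𝕜 F]

open RCLike in
theorem ContinuousLinearMap.opNorm_le_two_mul_iff_re_inner_le (A : E →L[𝕜] F) {c : ℝ}
    (hc : 0 ≤ c) :
    ‖A‖ ≤ 2 * c ↔ ∀ u v, re (inner 𝕜 (A u) v) ≤ c * (‖v‖ ^ 2 + ‖u‖ ^ 2) := by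
  constructor
  · intro hA u v
    calc re (inner 𝕜 (A u) v) ≤ ‖A u‖ * ‖v‖ := re_inner_le_norm _ _
      _ ≤ ‖A‖ * ‖u‖ * ‖v‖ := by gcongr; exact A.le_opNorm u
      _ ≤ 2 * c * ‖u‖ * ‖v‖ := by gcongr
      _ ≤ c * (‖v‖ ^ 2 + ‖u‖ ^ 2) := by nlinarith [two_mul_le_add_sq ‖u‖ ‖v‖]
  · intro h
    refine A.opNorm_le_bound (by positivity) fun u => ?_
    rcases eq_or_ne (A u) 0 with hAu | hAu
    · rw [hAu, norm_zero]; positivity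
    have hAu' : 0 < ‖A u‖ := norm_pos_iff.mpr hAu
    -- test against the multiple of `A u` with the same norm as `u`
    have := h u (((‖u‖ / ‖A u‖ : ℝ) : 𝕜) • A u)
    rw [inner_smul_real_right, RCLike.smul_re, inner_self_eq_norm_sq, norm_smul, norm_algebraMap',
      Real.norm_of_nonneg (by positivity), div_mul_cancel₀ _ hAu'.ne'] at this
    have hu : 0 < ‖u‖ := norm_pos_iff.mpr fun hu => hAu (by simp [hu])
    have hbound : ‖u‖ * ‖A u‖ ≤ ‖u‖ * (2 * c * ‖u‖) :=
      calc ‖u‖ * ‖A u‖ = ‖u‖ / ‖A u‖ * ‖A u‖ ^ 2 := by field_simp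
        _ ≤ c * (‖u‖ ^ 2 + ‖u‖ ^ 2) := this
        _ = ‖u‖ * (2 * c * ‖u‖) := by ring
    exact le_of_mul_le_mul_left hbound hu

end Bilinear

theorem Complex.re_exp_neg_mul_I_mul_le_norm (θ : ℝ) (c : ℂ) : (exp (-θ * I) * c).re ≤ ‖c‖ :=
  calc (exp (-θ * I) * c).re ≤ ‖exp (-θ * I) * c‖ := re_le_norm _
    _ = ‖c‖ := by rw [norm_mul, ← ofReal_neg, norm_exp_ofReal_mul_I, one_mul]

theorem Complex.re_exp_neg_arg_mul_I_mul (c : ℂ) : (exp (-c.arg * I) * c).re = ‖c‖ := by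
  nth_rewrite 2 [← norm_mul_exp_arg_mul_I c]
  rw [mul_left_comm, ← exp_add, neg_mul, neg_add_cancel, exp_zero, mul_one, ofReal_re]

section OffDiagonal

variable {H₁ H₂ : Type*} [NormedAddCommGroup H₁] [InnerProductSpace ℂ H₁]
  [NormedAddCommGroup H₂] [InnerProductSpace ℂ H₂] [CompleteSpace H₁] [CompleteSpace H₂]

noncomputable def rotatedSum (Y : H₂ →L[ℂ] H₁) (Z : H₁ →L[ℂ] H₂) (θ : ℝ) : H₂ →L[ℂ] H₁ :=
  exp (θ * I) • Y + exp (-θ * I) • adjoint Z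

theorem norm_rotatedSum_le (Y : H₂ →L[ℂ] H₁) (Z : H₁ →L[ℂ] H₂) (θ : ℝ) :
    ‖rotatedSum Y Z θ‖ ≤ ‖Y‖ + ‖Z‖ := by
  have hunit : ∀ t : ℝ, ‖exp (t * I)‖ = 1 := norm_exp_ofReal_mul_I
  calc ‖rotatedSum Y Z θ‖ ≤ ‖exp (θ * I) • Y‖ + ‖exp (-θ * I) • adjoint Z‖ := norm_add_le _ _
    _ = ‖Y‖ + ‖Z‖ := by
      rw [norm_smul, norm_smul, ← ofReal_neg, hunit, hunit, LinearIsometryEquiv.norm_map,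
        one_mul, one_mul]

theorem re_inner_rotatedSum_apply (Y : H₂ →L[ℂ] H₁) (Z : H₁ →L[ℂ] H₂) (θ : ℝ)
    (u : H₂) (v : H₁) :
    (inner ℂ (rotatedSum Y Z θ u) v).re =
      (exp (-θ * I) * (inner ℂ (Y u) v + inner ℂ (Z v) u)).re := by
  have hconj : ∀ t : ℝ, (starRingEnd ℂ) (exp (t * I)) = exp (-t * I) := fun t => by
    rw [← exp_conj, map_mul, conj_ofReal, conj_I, neg_mul, mul_neg]
  rw [rotatedSum, add_apply, smul_apply, smul_apply, inner_add_left, inner_smul_left,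
    inner_smul_left, adjoint_inner_left, hconj, ← inner_conj_symm u (Z v), ← map_mul, add_re,
    conj_re, mul_add, add_re]

end OffDiagonal

theorem inner_apply_self_of_offDiag {H₁ H₂ : Type*} [NormedAddCommGroup H₁]
    [InnerProductSpace ℂ H₁] [NormedAddCommGroup H₂] [InnerProductSpace ℂ H₂]
    {Y : H₂ →L[ℂ] H₁} {Z : H₁ →L[ℂ] H₂} {T : WithLp 2 (H₁ × H₂) →L[ℂ] WithLp 2 (H₁ × H₂)}
    (hT : ∀ x : WithLp 2 (H₁ × H₂),
      WithLp.equiv 2 (H₁ × H₂) (T x) =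
        (Y (WithLp.equiv 2 (H₁ × H₂) x).2, Z (WithLp.equiv 2 (H₁ × H₂) x).1))
    (x : WithLp 2 (H₁ × H₂)) :
    inner ℂ (T x) x = inner ℂ (Y x.snd) x.fst + inner ℂ (Z x.fst) x.snd := by
  rw [WithLp.prod_inner_apply, show (T x).ofLp = _ from hT x]
  rfl

theorem offdiag_operator_matrix_numRadius_sup
    {H₁ H₂ : Type*} [NormedAddCommGroup H₁] [InnerProductSpace ℂ H₁]
    [NormedAddCommGroup H₂] [InnerProductSpace ℂ H₂]
    [CompleteSpace H₁] [CompleteSpace H₂]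
    (Y : H₂ →L[ℂ] H₁) (Z : H₁ →L[ℂ] H₂)
    (T : WithLp 2 (H₁ × H₂) →L[ℂ] WithLp 2 (H₁ × H₂))
    (hT : ∀ x : WithLp 2 (H₁ × H₂),
      WithLp.equiv 2 (H₁ × H₂) (T x) =
        (Y (WithLp.equiv 2 (H₁ × H₂) x).2, Z (WithLp.equiv 2 (H₁ × H₂) x).1)) :
    numRadius T = ⨆ θ : ℝ,
      (1 / 2 : ℝ) * ‖Complex.exp (θ * Complex.I) • Y +
        Complex.exp (-θ * Complex.I) • ContinuousLinearMap.adjoint Z‖ := by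
  change numRadius T = ⨆ θ : ℝ, 1 / 2 * ‖rotatedSum Y Z θ‖
  have hbdd : BddAbove (Set.range fun θ : ℝ => 1 / 2 * ‖rotatedSum Y Z θ‖) :=
    ⟨1 / 2 * (‖Y‖ + ‖Z‖), by
      rintro _ ⟨θ, rfl⟩; exact mul_le_mul_of_nonneg_left (norm_rotatedSum_le Y Z θ) (by norm_num)⟩
  apply le_antisymm
  · refine numRadius_le T (Real.iSup_nonneg fun θ => by positivity) fun x => ?_
    set θ := (inner ℂ (T x) x).arg
    have hA := ((rotatedSum Y Z θ).opNorm_le_two_mul_iff_re_inner_le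
      (c := 1 / 2 * ‖rotatedSum Y Z θ‖) (by positivity)).mp (by linarith) x.snd x.fst
    calc ‖inner ℂ (T x) x‖ = (inner ℂ (rotatedSum Y Z θ x.snd) x.fst).re := by
          rw [← re_exp_neg_arg_mul_I_mul, re_inner_rotatedSum_apply,
            ← inner_apply_self_of_offDiag hT]
      _ ≤ 1 / 2 * ‖rotatedSum Y Z θ‖ * ‖x‖ ^ 2 := by rwa [WithLp.prod_norm_sq_eq_of_L2]
      _ ≤ (⨆ θ : ℝ, 1 / 2 * ‖rotatedSum Y Z θ‖) * ‖x‖ ^ 2 := by gcongr; exact le_ciSup hbdd θ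
  · refine ciSup_le fun θ => ?_
    suffices ‖rotatedSum Y Z θ‖ ≤ 2 * numRadius T by linarith
    refine ((rotatedSum Y Z θ).opNorm_le_two_mul_iff_re_inner_le (numRadius_nonneg T)).mpr
      fun u v => ?_
    set x : WithLp 2 (H₁ × H₂) := WithLp.toLp 2 (v, u)
    calc (inner ℂ (rotatedSum Y Z θ u) v).re = (exp (-θ * I) * inner ℂ (T x) x).re := by
          rw [re_inner_rotatedSum_apply, inner_apply_self_of_offDiag hT]; rfl
      _ ≤ ‖inner ℂ (T x) x‖ := re_exp_neg_mul_I_mul_le_norm θ _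
      _ ≤ numRadius T * ‖x‖ ^ 2 := norm_inner_apply_self_le_numRadius_mul_sq T x
      _ = numRadius T * (‖v‖ ^ 2 + ‖u‖ ^ 2) := by rw [WithLp.prod_norm_sq_eq_of_L2]; rfl
end

section
/- Let n ≥ 1 and let D be the n × n complex matrix with (D)_{jk} = 1 if j = k + 1 and 0 otherwise (the lower shift matrix with 1's on the subdiagonal). Then the numerical radius of D, viewed as an operator on the n-dimensional complex Euclidean space, equals cos(π/(n+1)). -/
open Finset ComplexConjugate

section PathQuadraticForm

variable {t : ℕ → ℝ} {c : ℝ}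

theorem two_mul_sum_sq_sub_sum_mul_eq (hrec : ∀ k, t k + t (k + 2) = 2 * c * t (k + 1))
    (b : ℕ → ℝ) (m : ℕ) :
    2 * c * ∑ k ∈ range m, (t (k + 1) * b k) ^ 2
        - 2 * ∑ k ∈ range m, t (k + 1) * b k * (t (k + 2) * b (k + 1))
      = ∑ k ∈ range m, t (k + 1) * t (k + 2) * (b k - b (k + 1)) ^ 2
        + (t 0 * t 1 * b 0 ^ 2 - t m * t (m + 1) * b m ^ 2) := by
  rw [← sum_range_sub' (fun k ↦ t k * t (k + 1) * b k ^ 2), mul_sum, mul_sum, ← sum_sub_distrib,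
    ← sum_add_distrib]
  refine sum_congr rfl fun k _ ↦ ?_
  linear_combination (-(t (k + 1) * b k ^ 2)) * hrec k

theorem sum_mul_succ_le {n : ℕ} (hrec : ∀ k, t k + t (k + 2) = 2 * c * t (k + 1))
    (ht₀ : t 0 = 0) (hpos : ∀ k < n, 0 < t (k + 1)) (htn : 0 ≤ t (n + 1)) (a : ℕ → ℝ)
    (ha : a n = 0) :
    ∑ k ∈ range n, a k * a (k + 1) ≤ c * ∑ k ∈ range n, a k ^ 2 := by
  set b : ℕ → ℝ := fun k ↦ a k / t (k + 1)
  have hbn : b n = 0 := by simp [b, ha]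
  have hab : ∀ k ≤ n, t (k + 1) * b k = a k := by
    intro k hk
    rcases hk.lt_or_eq with hk | rfl
    · exact mul_div_cancel₀ _ (hpos k hk).ne'
    · rw [hbn, mul_zero, ha]
  have hsq : ∑ k ∈ range n, a k ^ 2 = ∑ k ∈ range n, (t (k + 1) * b k) ^ 2 :=
    sum_congr rfl fun k hk ↦ by rw [hab k (mem_range.1 hk).le]
  have hmul : ∑ k ∈ range n, a k * a (k + 1)
      = ∑ k ∈ range n, t (k + 1) * b k * (t (k + 2) * b (k + 1)) :=
    sum_congr rfl fun k hk ↦ by rw [hab k (mem_range.1 hk).le, hab (k + 1) (mem_range.1 hk)]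
  have hsos : 0 ≤ ∑ k ∈ range n, t (k + 1) * t (k + 2) * (b k - b (k + 1)) ^ 2 := by
    refine sum_nonneg fun k hk ↦ ?_
    have hk := mem_range.1 hk
    have : 0 ≤ t (k + 2) := by
      rcases Nat.lt_or_ge (k + 1) n with h | h
      · exact (hpos (k + 1) h).le
      · rwa [show k + 2 = n + 1 by omega]
    have := (hpos k hk).le
    positivity
  have hid := two_mul_sum_sq_sub_sum_mul_eq hrec b n
  rw [ht₀, hbn] at hid
  rw [hsq, hmul]
  linarith

theorem sum_mul_succ_eq {n : ℕ} (hrec : ∀ k, t k + t (k + 2) = 2 * c * t (k + 1))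
    (ht₀ : t 0 = 0) (htn : t (n + 1) = 0) :
    ∑ k ∈ range n, t (k + 1) * t (k + 2) = c * ∑ k ∈ range n, t (k + 1) ^ 2 := by
  have hid := two_mul_sum_sq_sub_sum_mul_eq hrec 1 n
  simp only [Pi.one_apply, mul_one, sub_self, ht₀, htn, ne_eq, OfNat.ofNat_ne_zero,
    not_false_eq_true, zero_pow, mul_zero, sum_const_zero, zero_mul, add_zero] at hid
  linarith

end PathQuadraticForm

section ZeroExtend

variable {α : Type*} {n : ℕ}

def zeroExtend [Zero α] (x : Fin n → α) (m : ℕ) : α :=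
  if h : m < n then x ⟨m, h⟩ else 0

@[simp]
theorem zeroExtend_val [Zero α] (x : Fin n → α) (i : Fin n) : zeroExtend x i = x i := by
  simp [zeroExtend]

theorem zeroExtend_of_le [Zero α] (x : Fin n → α) {m : ℕ} (h : n ≤ m) : zeroExtend x m = 0 :=
  dif_neg h.not_gt

theorem sum_ite_val_eq_zeroExtend [AddCommMonoid α] (x : Fin n → α) (m : ℕ) :
    ∑ j : Fin n, (if (j : ℕ) = m then x j else 0) = zeroExtend x m := by
  by_cases h : m < n
  · rw [Fintype.sum_eq_single ⟨m, h⟩ fun j hj ↦ if_neg fun h' ↦ hj (Fin.ext h')]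
    simp [zeroExtend, h]
  · simp only [zeroExtend, h, dite_false]
    exact sum_eq_zero fun j _ ↦ if_neg fun h' : (j : ℕ) = m ↦ h (h' ▸ j.isLt)

theorem sum_univ_eq_sum_range_zeroExtend {M : Type*} [Zero α] [AddCommMonoid M] (f : α → M)
    (x : Fin n → α) : ∑ i, f (x i) = ∑ k ∈ range n, f (zeroExtend x k) := by
  simp [← Fin.sum_univ_eq_sum_range (fun k ↦ f (zeroExtend x k))]

end ZeroExtend

theorem numRadius_eq_of_le_of_eq {H : Type*} [NormedAddCommGroup H] [InnerProductSpace ℂ H]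
    {T : H →L[ℂ] H} {c : ℝ} (hle : ∀ x, ‖inner ℂ (T x) x‖ ≤ c * ‖x‖ ^ 2) {x₀ : H} (hx₀ : x₀ ≠ 0)
    (heq : inner ℂ (T x₀) x₀ = (c * ‖x₀‖ ^ 2 : ℝ)) : numRadius T = c := by
  have hx₀' : 0 < ‖x₀‖ ^ 2 := by positivity
  have hc : 0 ≤ c := by
    have := hle x₀
    rw [heq, Complex.norm_real, Real.norm_eq_abs] at this
    exact nonneg_of_mul_nonneg_left ((abs_nonneg _).trans this) hx₀'
  have hnorm : ‖inner ℂ (T x₀) x₀‖ = c * ‖x₀‖ ^ 2 := by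
    rw [heq, Complex.norm_real, Real.norm_of_nonneg (by positivity)]
  refine IsGreatest.csSup_eq ⟨⟨(‖x₀‖⁻¹ : ℂ) • x₀, norm_smul_inv_norm hx₀, ?_⟩, ?_⟩
  · simp only [map_smul, inner_smul_left, inner_smul_right, norm_mul, hnorm, RCLike.norm_conj,
      norm_inv, Complex.norm_real, norm_norm]
    field_simp
  · rintro r ⟨x, hx, rfl⟩
    simpa [hx] using hle x

section LowerShift

variable {n : ℕ} {D : Matrix (Fin n) (Fin n) ℂ}

theorem inner_toEuclideanCLM_lowerShift
    (hD : ∀ j k : Fin n, D j k = if (j : ℕ) = (k : ℕ) + 1 then 1 else 0)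
    (x : EuclideanSpace ℂ (Fin n)) :
    inner ℂ (Matrix.toEuclideanCLM (𝕜 := ℂ) D x) x
      = ∑ k ∈ range n, conj (zeroExtend x k) * zeroExtend x (k + 1) := by
  rw [EuclideanSpace.inner_eq_star_dotProduct, Matrix.ofLp_toEuclideanCLM]
  simp only [dotProduct]
  calc ∑ i, x i * star (D.mulVec x.ofLp) i
      = ∑ k : Fin n, ∑ i : Fin n, (if (i : ℕ) = k + 1 then conj (x k) * x i else 0) := by
        rw [sum_comm]
        refine sum_congr rfl fun i _ ↦ ?_
        simp only [Pi.star_apply, Matrix.mulVec, dotProduct, hD, ite_mul, one_mul, zero_mul,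
          star_sum, mul_sum]
        refine sum_congr rfl fun k _ ↦ ?_
        split_ifs <;> simp [mul_comm]
    _ = ∑ k : Fin n, conj (x k) * zeroExtend x (k + 1) := by
        simp_rw [← sum_ite_val_eq_zeroExtend, mul_sum, mul_ite, mul_zero]
    _ = _ := by
        rw [← Fin.sum_univ_eq_sum_range (fun k ↦ conj (zeroExtend x k) * zeroExtend x (k + 1))]
        simp

theorem norm_sq_eq_sum_range_zeroExtend (x : EuclideanSpace ℂ (Fin n)) :
    ‖x‖ ^ 2 = ∑ k ∈ range n, ‖zeroExtend x k‖ ^ 2 := by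
  rw [EuclideanSpace.norm_sq_eq, sum_univ_eq_sum_range_zeroExtend (‖·‖ ^ 2)]

theorem numRadius_lowerShift_eq_of_path_eigenvector (hn : 1 ≤ n)
    (hD : ∀ j k : Fin n, D j k = if (j : ℕ) = (k : ℕ) + 1 then 1 else 0) {t : ℕ → ℝ} {c : ℝ}
    (hrec : ∀ k, t k + t (k + 2) = 2 * c * t (k + 1)) (ht₀ : t 0 = 0) (htn : t (n + 1) = 0)
    (hpos : ∀ k < n, 0 < t (k + 1)) :
    numRadius (Matrix.toEuclideanCLM (𝕜 := ℂ) D) = c := by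
  set v : EuclideanSpace ℂ (Fin n) := WithLp.toLp 2 fun j ↦ (t (j + 1) : ℂ)
  have hv : ∀ k ≤ n, zeroExtend v k = (t (k + 1) : ℂ) := by
    intro k hk
    rcases hk.lt_or_eq with hk | rfl
    · simp [zeroExtend, hk, v]
    · rw [zeroExtend_of_le _ le_rfl, htn, Complex.ofReal_zero]
  have hvnorm : ‖v‖ ^ 2 = ∑ k ∈ range n, t (k + 1) ^ 2 := by
    rw [norm_sq_eq_sum_range_zeroExtend]
    refine sum_congr rfl fun k hk ↦ ?_
    rw [hv k (mem_range.1 hk).le, Complex.norm_real, Real.norm_eq_abs, sq_abs]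
  refine numRadius_eq_of_le_of_eq (x₀ := v) (fun x ↦ ?_) ?_ ?_
  · rw [inner_toEuclideanCLM_lowerShift hD, norm_sq_eq_sum_range_zeroExtend]
    calc _ ≤ ∑ k ∈ range n, ‖zeroExtend x k‖ * ‖zeroExtend x (k + 1)‖ :=
          norm_sum_le_of_le _ fun k _ ↦ by simp
      _ ≤ _ := sum_mul_succ_le hrec ht₀ hpos htn.ge _ (by simp [zeroExtend_of_le])
  · rw [← norm_ne_zero_iff, ← pow_ne_zero_iff two_ne_zero, hvnorm]
    exact (sum_pos (fun k hk ↦ pow_pos (hpos k (mem_range.1 hk)) 2)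
      (nonempty_range_iff.2 (by omega))).ne'
  · rw [inner_toEuclideanCLM_lowerShift hD, hvnorm, ← sum_mul_succ_eq hrec ht₀ htn,
      sum_congr rfl fun k hk ↦ by rw [hv k (mem_range.1 hk).le, hv (k + 1) (mem_range.1 hk)]]
    push_cast
    simp only [Complex.conj_ofReal]

end LowerShift

theorem Real.sin_nat_mul_add_sin_nat_add_two_mul (θ : ℝ) (k : ℕ) :
    Real.sin (k * θ) + Real.sin ((k + 2 : ℕ) * θ)
      = 2 * Real.cos θ * Real.sin ((k + 1 : ℕ) * θ) := by
  push_cast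
  rw [show ((k : ℝ) + 2) * θ = (k + 1) * θ + θ by ring, show (k : ℝ) * θ = (k + 1) * θ - θ by ring,
    Real.sin_add, Real.sin_sub]
  ring

theorem Real.sin_nat_mul_pi_div_pos {n k : ℕ} (hk₀ : 0 < k) (hkn : k < n) :
    0 < Real.sin (k * (Real.pi / n)) := by
  have hn : (0 : ℝ) < n := by exact_mod_cast hk₀.trans hkn
  apply Real.sin_pos_of_pos_of_lt_pi (by positivity)
  rw [← mul_div_assoc, div_lt_iff₀ hn, mul_comm]
  exact mul_lt_mul_of_pos_left (by exact_mod_cast hkn) Real.pi_pos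

theorem numRadius_lower_shift (n : ℕ) (hn : 1 ≤ n)
    (D : Matrix (Fin n) (Fin n) ℂ)
    (hD : ∀ j k : Fin n, D j k = if (j : ℕ) = (k : ℕ) + 1 then 1 else 0) :
    numRadius (Matrix.toEuclideanCLM (𝕜 := ℂ) D) = Real.cos (Real.pi / (n + 1)) := by
  rw [← Nat.cast_succ]
  refine numRadius_lowerShift_eq_of_path_eigenvector hn hD
    (t := fun k ↦ Real.sin (k * (Real.pi / (n + 1 : ℕ))))
    (Real.sin_nat_mul_add_sin_nat_add_two_mul _) (by simp) ?_
    fun k hk ↦ Real.sin_nat_mul_pi_div_pos k.succ_pos (Nat.succ_lt_succ hk)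
  rw [mul_div_cancel₀ _ (by positivity), Real.sin_pi]
end

section
/- Let n ≥ 2 and let p(z) = zⁿ + a_{n-1}z^{n-1} + ⋯ + a₁z + a₀ be a monic polynomial of degree n with complex coefficients. Let q(η) = p(η − a_{n-1}/n), so that q is monic of degree n with vanishing coefficient of η^{n-1}, and let α_r denote the coefficient of η^r in q for 0 ≤ r ≤ n−2. Set α = Σ_{i=0}^{n-2} |α_i|². Then every root λ of p satisfies |λ| ≤ |a_{n-1}|/n + cos(π/n) + (1/2)·((1+α)² + 4α + 4√α·(1+α))^{1/4}. -/
open Polynomial Finset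

lemma key_bound (n : ℕ) (hn : 2 ≤ n) (q : Polynomial ℂ) (hq : q.Monic)
    (hqd : q.natDegree = n) (hc : q.coeff (n-1) = 0) (μ : ℂ) (hμ : q.eval μ = 0)
    (α : ℝ) (hα : α = ∑ i ∈ Finset.range (n - 1), ‖q.coeff i‖ ^ 2) :
    ‖μ‖ ≤ Real.cos (Real.pi / n) + (1 + Real.sqrt α) / 2 := by
  set t := Real.sqrt α with htdef
  have hα0 : 0 ≤ α := by
    rw [hα]; exact Finset.sum_nonneg fun i _ => sq_nonneg _
  have ht0 : 0 ≤ t := Real.sqrt_nonneg α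
  have ht2 : t ^ 2 = α := Real.sq_sqrt hα0
  set r := ‖μ‖ with hrdef
  have hr0 : 0 ≤ r := norm_nonneg μ
  -- μ^n = - sum
  have hev : μ ^ n = -∑ i ∈ Finset.range (n-1), q.coeff i * μ ^ i := by
    have h0 : (0:ℂ) = ∑ i ∈ Finset.range (n+1), q.coeff i * μ ^ i := by
      rw [← Polynomial.eval_eq_sum_range' (by omega : q.natDegree < n+1), hμ]
    rw [Finset.sum_range_succ] at h0
    have hmn : n = (n-1) + 1 := by omega
    rw [hmn, Finset.sum_range_succ, ← hmn] at h0
    have hcn : q.coeff n = 1 := by rw [← hqd]; exact hq.coeff_natDegree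
    rw [hc, hcn] at h0
    simp at h0
    linear_combination -h0
  have hrn : r ^ n ≤ ∑ i ∈ Finset.range (n-1), ‖q.coeff i‖ * r ^ i := by
    calc r ^ n = ‖μ ^ n‖ := (norm_pow μ n).symm
    _ = ‖∑ i ∈ Finset.range (n-1), q.coeff i * μ ^ i‖ := by rw [hev, norm_neg]
    _ ≤ ∑ i ∈ Finset.range (n-1), ‖q.coeff i * μ ^ i‖ := norm_sum_le _ _
    _ = ∑ i ∈ Finset.range (n-1), ‖q.coeff i‖ * r ^ i :=
        Finset.sum_congr rfl fun i _ => by rw [norm_mul, norm_pow]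
  rcases eq_or_lt_of_le hn with h2 | h3
  · -- n = 2
    subst h2
    simp only [show (2:ℕ)-1 = 1 from rfl, Finset.sum_range_one, pow_zero, mul_one] at hrn hα
    have hts : t = ‖q.coeff 0‖ := by rw [htdef, hα]; exact Real.sqrt_sq (norm_nonneg _)
    have hcos0 : Real.cos (Real.pi / (2:ℕ)) = 0 := by
      norm_num [Real.cos_pi_div_two]
    rw [hcos0]
    nlinarith [hrn, hts, hr0, sq_nonneg (r - 1)]
  · -- n ≥ 3
    have hcos : (1:ℝ)/2 ≤ Real.cos (Real.pi / n) := by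
      rw [← Real.cos_pi_div_three]
      apply Real.cos_le_cos_of_nonneg_of_le_pi
      · positivity
      · linarith [Real.pi_pos]
      · rw [div_le_div_iff₀ (by positivity) (by norm_num)]
        have h3' : (3:ℝ) ≤ n := by exact_mod_cast h3
        nlinarith [Real.pi_pos]
    rcases le_or_gt r 1 with hr1 | hr1
    · linarith
    · have hrs1 : (1:ℝ) < r^2 := by nlinarith
      have hcs := Finset.sum_mul_sq_le_sq_mul_sq (Finset.range (n-1))
        (fun i => ‖q.coeff i‖) (fun i => r ^ i)
      have hgeom : ∑ i ∈ Finset.range (n-1), (r ^ i) ^ 2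
          ≤ (r^2) ^ (n-1) / (r^2 - 1) := by
        calc ∑ i ∈ Finset.range (n-1), (r ^ i) ^ 2
            = ∑ i ∈ Finset.range (n-1), (r^2) ^ i := by
              refine Finset.sum_congr rfl fun i _ => by rw [← pow_mul, ← pow_mul, mul_comm]
        _ = ((r^2)^(n-1) - 1)/(r^2 - 1) := geom_sum_eq (by linarith) (n-1)
        _ ≤ (r^2) ^ (n-1) / (r^2 - 1) := by
              have hd : (0:ℝ) < r^2 - 1 := by linarith
              gcongr
              linarith
      have hsum0 : 0 ≤ ∑ i ∈ Finset.range (n-1), ‖q.coeff i‖ * r ^ i :=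
        Finset.sum_nonneg fun i _ => by positivity
      have h4 : (r^n)^2 ≤ α * ((r^2)^(n-1) / (r^2-1)) := by
        calc (r^n)^2 ≤ (∑ i ∈ Finset.range (n-1), ‖q.coeff i‖ * r ^ i)^2 :=
              pow_le_pow_left₀ (by positivity) hrn 2
        _ ≤ (∑ i ∈ Finset.range (n-1), ‖q.coeff i‖^2) * (∑ i ∈ Finset.range (n-1), (r^i)^2) := hcs
        _ = α * ∑ i ∈ Finset.range (n-1), (r^i)^2 := by rw [hα]
        _ ≤ α * ((r^2)^(n-1) / (r^2-1)) := mul_le_mul_of_nonneg_left hgeom hα0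
      have hpow : (r^n)^2 = (r^2)^(n-1) * r^2 := by
        rw [← pow_mul, ← pow_mul, ← pow_add]
        congr 1
        omega
      have h4' : (r^n)^2 ≤ α * (r^2)^(n-1) / (r^2-1) := by rw [mul_div_assoc]; exact h4
      have h5 := (le_div_iff₀ (by linarith : (0:ℝ) < r^2 - 1)).mp h4'
      have h6 : r^2 * (r^2-1) ≤ α := by
        have hp1 : (0:ℝ) < (r^2)^(n-1) := by positivity
        apply le_of_mul_le_mul_right ?_ hp1
        calc r^2*(r^2-1) * (r^2)^(n-1) = (r^n)^2 * (r^2-1) := by rw [hpow]; ring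
        _ ≤ α * (r^2)^(n-1) := h5
      rw [← ht2] at h6
      have hu : (0:ℝ) < r - 1 := by linarith
      nlinarith [h6, ht0, hcos, mul_pos hu hu, mul_pos (mul_pos hu hu) hu,
        sq_nonneg (t - 2*(r-1)), mul_pos hu (by linarith : (0:ℝ) < r)]



theorem polynomial_root_bound (n : ℕ) (hn : 2 ≤ n)
    (p : Polynomial ℂ) (hp : p.Monic) (hdeg : p.natDegree = n)
    (q : Polynomial ℂ)
    (hq : q = p.comp (Polynomial.X - Polynomial.C (p.coeff (n - 1) / (n : ℂ))))
    (α : ℝ) (hα : α = ∑ i ∈ Finset.range (n - 1), ‖q.coeff i‖ ^ 2)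
    (lam : ℂ) (hroot : p.IsRoot lam) :
    ‖lam‖ ≤ ‖p.coeff (n - 1)‖ / n + Real.cos (Real.pi / n) +
      (1 / 2 : ℝ) * ((1 + α) ^ 2 + 4 * α + 4 * Real.sqrt α * (1 + α)) ^ ((1 : ℝ) / 4) := by
  have hα0 : 0 ≤ α := by
    rw [hα]; exact Finset.sum_nonneg fun i _ => sq_nonneg _
  set c : ℂ := p.coeff (n - 1) / (n : ℂ) with hcdef
  have hnc : (n : ℂ) ≠ 0 := Nat.cast_ne_zero.mpr (by omega)
  have hqt : q = taylor (-c) p := by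
    rw [hq, taylor_apply, map_neg, sub_eq_add_neg]
  -- q properties
  have hqc : q.coeff (n-1) = 0 := by
    rw [hqt, taylor_coeff]
    have hd : (Polynomial.hasseDeriv (n-1) p).natDegree < 2 := by
      have := Polynomial.natDegree_hasseDeriv_le p (n-1)
      omega
    rw [Polynomial.eval_eq_sum_range' hd]
    rw [Finset.sum_range_succ, Finset.sum_range_one]
    rw [Polynomial.hasseDeriv_coeff, Polynomial.hasseDeriv_coeff]
    have e1 : 0 + (n-1) = n - 1 := by omega
    have e2 : 1 + (n-1) = n := by omega
    rw [e1, e2, Nat.choose_self]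
    have e3 : n.choose (n-1) = n := by
      have := Nat.choose_symm (show 1 ≤ n by omega)
      simp at this
      omega
    have hcn : p.coeff n = 1 := by rw [← hdeg]; exact hp.coeff_natDegree
    rw [e3, hcn]
    simp only [pow_zero, pow_one, mul_one, Nat.cast_one, one_mul, hcdef]
    field_simp
    ring
  have hqm : q.Monic := by
    rw [hq]
    exact hp.comp (monic_X_sub_C c) (by simp)
  have hqd : q.natDegree = n := by rw [hqt, natDegree_taylor, hdeg]
  -- root of q
  set μ : ℂ := lam + c with hμdef
  have hμ : q.eval μ = 0 := by
    rw [hq, Polynomial.eval_comp]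
    simp only [Polynomial.eval_sub, Polynomial.eval_X, Polynomial.eval_C, hμdef]
    simpa using hroot
  have hkey := key_bound n hn q hqm hqd hqc μ hμ α hα
  -- norm of c
  have hcnorm : ‖c‖ = ‖p.coeff (n-1)‖ / n := by
    rw [hcdef, norm_div]
    norm_num
  have hlam : ‖lam‖ ≤ ‖μ‖ + ‖c‖ := by
    have : lam = μ - c := by rw [hμdef]; ring
    rw [this]
    exact norm_sub_le μ c
  -- rpow simplification
  have hrpow : ((1 + α) ^ 2 + 4 * α + 4 * Real.sqrt α * (1 + α)) ^ ((1 : ℝ) / 4)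
      = 1 + Real.sqrt α := by
    have ht : Real.sqrt α ^ 2 = α := Real.sq_sqrt hα0
    have h1 : ((1 + α) ^ 2 + 4 * α + 4 * Real.sqrt α * (1 + α))
        = (1 + Real.sqrt α) ^ 4 := by
      linear_combination (-(6 + 4*Real.sqrt α + α + Real.sqrt α^2)) * ht
    rw [h1, ← Real.rpow_natCast (1 + Real.sqrt α) 4,
      ← Real.rpow_mul (by positivity)]
    norm_num
  rw [hrpow]
  rw [hcnorm] at hlam
  linarith [hkey, hlam]
end
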